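/- arXiv:2302.13534 — 2 statements merged into one kernel-verified Lean document; each statement's English description precedes it below -/
import Mathlib

section
/- Let d ≥ 1, C_log > 0, ψ : (0,∞) → ℝ be a twice-differentiable convex function such that ψ''(x)/4 ≤ ψ''(z) ≤ 4ψ''(x) for every x > 0 and every z ∈ [x/2, 2x]. Let γ, γ' ∈ ℝ^d with 0 < γ_i ≤ γ'_i for all i, and L, L' ∈ ℝ^d with positive entries. Define φ(p) = ∑_i γ_i ψ(p_i), φ'(p) = ∑_i γ'_i ψ(p_i), φ_L(p) = −C_log ∑_i log p_i, F(p) = ⟨p, L⟩ + φ(p) + φ_L(p), and F'(p) = ⟨p, L'⟩ + φ'(p) + φ_L(p). Let Ω ⊆ (0,∞)^d be a convex set, and let x minimize F over Ω and y minimize F' over Ω. If C_log ≥ max{9, 32·∑_i (L'_i − L_i)^2 x_i^2, 32·∑_i (γ'_i − γ_i)^2 ψ'(x_i)^2 x_i^2}, then (1/2)·x_i ≤ y_i ≤ 2·x_i for every i ∈ [d]. -/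
/-!
Suppose some `y i` leaves `[x i / 2, 2 * x i]`. Moving from `x` towards `y` until the relative
displacement `v = (z - x) / x` first reaches sup-norm `1/2` gives a point `z ∈ Ω` with
`F' z ≤ F' x`, by convexity of `F'` and minimality of `y`. Since `x` minimizes `F`, the strong
convexity of the log-barrier in relative coordinates gives `F z - F x ≥ (31/128) C_log ∑ vᵢ²`.
On the other hand `F - F'` is, up to the tangent line of `ψ` at `x`, linear, so
`F z - F x ≤ (F - F') z - (F - F') x ≤ ∑ bᵢ xᵢ vᵢ` with `b = (L - L') + (γ - γ') ψ'(x)`.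
Cauchy–Schwarz and the bound `∑ (bᵢ xᵢ)² ≤ C_log / 8` then force `C_log (31/128)² ∑ vᵢ² ≤ 1/8`,
which is impossible when `∑ vᵢ² ≥ 1/4` and `C_log ≥ 9`.
-/

open Real Set Finset

namespace Real

theorem log_one_add_le_sub_sq_div_four {v : ℝ} (h₁ : -1 < v) (h₂ : v ≤ 1) :
    log (1 + v) ≤ v - v ^ 2 / 4 := by
  rw [log_le_iff_le_exp (by linarith)]
  rcases le_total 0 v with hv | hv
  · have hy : 0 ≤ v - v ^ 2 / 4 := by nlinarith
    nlinarith [quadratic_le_exp_of_nonneg hy, mul_nonneg (sq_nonneg v) (sub_nonneg.2 h₂)]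
  · have hsq : exp ((v - v ^ 2 / 4) / 2) ^ 2 = exp (v - v ^ 2 / 4) := by
      rw [sq, ← exp_add, add_halves]
    have hpow := pow_le_pow_left₀ (by nlinarith) (add_one_le_exp ((v - v ^ 2 / 4) / 2)) 2
    nlinarith [mul_nonneg (sq_nonneg v) (neg_nonneg.2 hv)]

theorem sub_two_mul_sq_le_log_one_add {w : ℝ} (h : -1 / 2 ≤ w) : w - 2 * w ^ 2 ≤ log (1 + w) := by
  have hw : 0 < 1 + w := by linarith
  have hchord : w - 2 * w ^ 2 ≤ 1 - (1 + w)⁻¹ := by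
    rw [show 1 - (1 + w)⁻¹ = w / (1 + w) by field_simp; ring, le_div_iff₀ hw]
    nlinarith [mul_nonneg (sq_nonneg w) (by linarith : (0 : ℝ) ≤ 1 + 2 * w)]
  linarith [one_sub_inv_le_log_of_pos hw]

theorem mul_log_one_add_add_le_log_one_add_mul {s v : ℝ} (hs₀ : 0 ≤ s) (hs₁ : s ≤ 1)
    (hv : |v| ≤ 1 / 2) : s * log (1 + v) + s * (1 / 4 - 2 * s) * v ^ 2 ≤ log (1 + s * v) := by
  obtain ⟨hv₁, hv₂⟩ := abs_le.mp hv
  have hupper := log_one_add_le_sub_sq_div_four (by linarith : -1 < v) (by linarith)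
  have hlower := sub_two_mul_sq_le_log_one_add (w := s * v) (by nlinarith)
  nlinarith [mul_le_mul_of_nonneg_left hupper hs₀]

end Real

theorem ConvexOn.add_mul_sub_le_of_hasDerivAt {S : Set ℝ} {f : ℝ → ℝ} {x y f' : ℝ}
    (hf : ConvexOn ℝ S f) (hx : x ∈ S) (hy : y ∈ S) (hfx : HasDerivAt f f' x) :
    f x + f' * (y - x) ≤ f y := by
  rcases lt_trichotomy x y with h | rfl | h
  · have := hf.le_slope_of_hasDerivAt hx hy h hfx
    rw [slope_def_field, le_div_iff₀ (sub_pos.2 h)] at this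
    linarith
  · simp
  · have := hf.slope_le_of_hasDerivAt hy hx h hfx
    rw [slope_def_field, div_le_iff₀ (sub_pos.2 h)] at this
    linarith

section SumPi

variable {ι 𝕜 E β : Type*} [Fintype ι]

theorem ConvexOn.sum_pi [Semiring 𝕜] [PartialOrder 𝕜] [AddCommMonoid E] [SMul 𝕜 E]
    [AddCommMonoid β] [PartialOrder β] [IsOrderedAddMonoid β] [Module 𝕜 β]
    {s : Set E} {f : ι → E → β} (hf : ∀ i, ConvexOn 𝕜 s (f i)) :
    ConvexOn 𝕜 (univ.pi fun _ => s) fun p => ∑ i, f i (p i) := by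
  refine ⟨convex_pi fun i _ => (hf i).1, fun p hp q hq a b ha hb hab => ?_⟩
  simp only [Pi.add_apply, Pi.smul_apply, smul_sum, ← sum_add_distrib]
  exact sum_le_sum fun i _ => (hf i).2 (hp i (mem_univ i)) (hq i (mem_univ i)) ha hb hab

theorem ConcaveOn.sum_pi [Semiring 𝕜] [PartialOrder 𝕜] [AddCommMonoid E] [SMul 𝕜 E]
    [AddCommMonoid β] [PartialOrder β] [IsOrderedAddMonoid β] [Module 𝕜 β]
    {s : Set E} {f : ι → E → β} (hf : ∀ i, ConcaveOn 𝕜 s (f i)) :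
    ConcaveOn 𝕜 (univ.pi fun _ => s) fun p => ∑ i, f i (p i) :=
  ConvexOn.sum_pi (β := βᵒᵈ) hf

end SumPi

namespace LogBarrier

variable {ι : Type*} [Fintype ι]

def regularizedLoss (φ : ℝ → ℝ) (γ ℓ p : ι → ℝ) : ℝ :=
  (∑ i, p i * ℓ i) + ∑ i, γ i * φ (p i)

theorem convexOn_regularizedLoss {φ : ℝ → ℝ} {γ : ι → ℝ} (ℓ : ι → ℝ) (hφ : ConvexOn ℝ (Ioi 0) φ)
    (hγ : ∀ i, 0 ≤ γ i) :
    ConvexOn ℝ (univ.pi fun _ => Ioi 0) (regularizedLoss φ γ ℓ) :=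
  (ConvexOn.sum_pi fun i => (LinearMap.mulRight ℝ (ℓ i)).convexOn (convex_Ioi 0)).add
    (ConvexOn.sum_pi fun i => hφ.smul (hγ i))

theorem concaveOn_mul_sum_log {c : ℝ} (hc : 0 ≤ c) :
    ConcaveOn ℝ (univ.pi fun _ => Ioi 0) fun p : ι → ℝ => c * ∑ i, log (p i) :=
  (ConcaveOn.sum_pi fun _ => strictConcaveOn_log_Ioi.concaveOn).smul hc

theorem regularizedLoss_sub_sub_le {φ φ' : ℝ → ℝ} {γ γ' ℓ ℓ' x z : ι → ℝ}
    (hφ : ConvexOn ℝ (Ioi 0) φ) (hφ' : ∀ u > 0, HasDerivAt φ (φ' u) u) (hγ : ∀ i, γ i ≤ γ' i)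
    (hx : ∀ i, 0 < x i) (hz : ∀ i, 0 < z i) :
    (regularizedLoss φ γ ℓ z - regularizedLoss φ γ ℓ x)
        - (regularizedLoss φ γ' ℓ' z - regularizedLoss φ γ' ℓ' x)
      ≤ ∑ i, ((ℓ i - ℓ' i) + (γ i - γ' i) * φ' (x i)) * (z i - x i) := by
  simp only [regularizedLoss, ← sum_add_distrib, ← sum_sub_distrib]
  refine sum_le_sum fun i _ => ?_
  have htangent := hφ.add_mul_sub_le_of_hasDerivAt (hx i) (hz i) (hφ' _ (hx i))
  nlinarith [mul_nonneg (sub_nonneg.2 (hγ i)) (sub_nonneg.2 htangent)]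

theorem mul_sum_sq_le_sub_of_isMinOn {H : (ι → ℝ) → ℝ} {Ω : Set (ι → ℝ)} {c s : ℝ} {x v : ι → ℝ}
    (hH : ConvexOn ℝ Ω H) (hmin : IsMinOn (fun p => H p - c * ∑ i, log (p i)) Ω x)
    (hx : x ∈ Ω) (hz : x * (1 + v) ∈ Ω) (hxpos : ∀ i, 0 < x i) (hv : ∀ i, |v i| ≤ 1 / 2)
    (hc : 0 ≤ c) (hs₀ : 0 < s) (hs₁ : s ≤ 1) :
    c * (1 / 4 - 2 * s) * ∑ i, v i ^ 2 ≤
      (H (x * (1 + v)) - c * ∑ i, log ((x * (1 + v)) i)) - (H x - c * ∑ i, log (x i)) := by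
  set z := x * (1 + v)
  set w := (1 - s) • x + s • z
  have hwΩ : w ∈ Ω := hH.1 hx hz (by linarith) hs₀.le (by ring)
  have hHw : H w ≤ (1 - s) * H x + s * H z := hH.2 hx hz (by linarith) hs₀.le (by ring)
  have hlog : (1 - s) * ∑ i, log (x i) + s * ∑ i, log (z i) + s * ((1 / 4 - 2 * s) * ∑ i, v i ^ 2)
      ≤ ∑ i, log (w i) := by
    simp only [mul_sum, ← sum_add_distrib]
    refine sum_le_sum fun i _ => ?_
    obtain ⟨hv₁, hv₂⟩ := abs_le.mp (hv i)
    have hwi : w i = x i * (1 + s * v i) := by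
      simp only [w, z, Pi.add_apply, Pi.smul_apply, Pi.mul_apply, Pi.one_apply, smul_eq_mul]
      ring
    have hzi : z i = x i * (1 + v i) := rfl
    have hsv : 0 < 1 + s * v i := by nlinarith
    rw [hwi, hzi, log_mul (hxpos i).ne' hsv.ne', log_mul (hxpos i).ne' (by linarith)]
    nlinarith [mul_log_one_add_add_le_log_one_add_mul hs₀.le hs₁ (hv i)]
  have hxw := isMinOn_iff.mp hmin w hwΩ
  have key : s * (c * (1 / 4 - 2 * s) * ∑ i, v i ^ 2) ≤
      s * ((H z - c * ∑ i, log (z i)) - (H x - c * ∑ i, log (x i))) := by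
    nlinarith [mul_le_mul_of_nonneg_left hlog hc]
  exact le_of_mul_le_mul_left key hs₀

theorem exists_rescaling_of_half_lt_abs {u : ι → ℝ} {j : ι} (hj : 1 / 2 < |u j|) :
    ∃ t, 0 < t ∧ t < 1 ∧ (∀ i, |t * u i| ≤ 1 / 2) ∧ 1 / 4 ≤ ∑ i, (t * u i) ^ 2 := by
  have : Nonempty ι := ⟨j⟩
  obtain ⟨k, hk⟩ := Finite.exists_max fun i => |u i|
  have hk_pos : 0 < |u k| := by linarith [hk j]
  refine ⟨1 / (2 * |u k|), by positivity, ?_, fun i => ?_, ?_⟩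
  · rw [div_lt_one (by positivity)]
    linarith [hk j]
  · rw [abs_mul, abs_of_pos (by positivity), div_mul_eq_mul_div, div_le_iff₀ (by positivity)]
    linarith [hk i]
  · calc 1 / 4 = (1 / (2 * |u k|) * u k) ^ 2 := by
          rw [mul_pow, ← sq_abs (u k)]; field_simp; norm_num
      _ ≤ ∑ i, (1 / (2 * |u k|) * u i) ^ 2 :=
          single_le_sum (f := fun i => (1 / (2 * |u k|) * u i) ^ 2)
            (fun i _ => sq_nonneg _) (mem_univ k)

theorem sq_mul_sum_sq_le_of_mul_sum_sq_le_sum_mul {a v : ι → ℝ} {m B : ℝ} (hm : 0 ≤ m)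
    (ha : ∑ i, a i ^ 2 ≤ B) (h : m * ∑ i, v i ^ 2 ≤ ∑ i, a i * v i) :
    m ^ 2 * ∑ i, v i ^ 2 ≤ B := by
  have hV : 0 ≤ ∑ i, v i ^ 2 := sum_nonneg fun i _ => sq_nonneg _
  rcases hV.eq_or_lt with hV0 | hV_pos
  · rw [← hV0, mul_zero]
    exact (sum_nonneg fun i _ => sq_nonneg _).trans ha
  · have hsq := pow_le_pow_left₀ (mul_nonneg hm hV) h 2
    have hcs := sum_mul_sq_le_sq_mul_sq univ a v
    refine le_of_mul_le_mul_right ?_ hV_pos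
    nlinarith [mul_le_mul_of_nonneg_right ha hV]

theorem sq_mul_sum_sq_le_of_isMinOn_of_le {ψ ψ' : ℝ → ℝ} {γ γ' ℓ ℓ' : ι → ℝ}
    {Ω : Set (ι → ℝ)} {c : ℝ} {x v : ι → ℝ} (hψ : ∀ u > 0, HasDerivAt ψ (ψ' u) u)
    (hψconv : ConvexOn ℝ (Ioi 0) ψ) (hγ : ∀ i, 0 ≤ γ i) (hγle : ∀ i, γ i ≤ γ' i)
    (hΩconv : Convex ℝ Ω) (hΩpos : ∀ p ∈ Ω, ∀ i, 0 < p i) (hx : x ∈ Ω)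
    (hxmin : IsMinOn (fun p => regularizedLoss ψ γ ℓ p - c * ∑ i, log (p i)) Ω x)
    (hz : x * (1 + v) ∈ Ω) (hv : ∀ i, |v i| ≤ 1 / 2)
    (hF' : regularizedLoss ψ γ' ℓ' (x * (1 + v)) - c * ∑ i, log ((x * (1 + v)) i)
      ≤ regularizedLoss ψ γ' ℓ' x - c * ∑ i, log (x i))
    (hc : 0 ≤ c) (hℓc : 32 * ∑ i, (ℓ' i - ℓ i) ^ 2 * x i ^ 2 ≤ c)
    (hγc : 32 * ∑ i, (γ' i - γ i) ^ 2 * ψ' (x i) ^ 2 * x i ^ 2 ≤ c) :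
    (c * (31 / 128)) ^ 2 * ∑ i, v i ^ 2 ≤ c / 8 := by
  have hxpos := hΩpos x hx
  have hΩsub : Ω ⊆ univ.pi fun _ => Ioi 0 := fun p hp i _ => hΩpos p hp i
  have hgap := mul_sum_sq_le_sub_of_isMinOn
    ((convexOn_regularizedLoss ℓ hψconv hγ).subset hΩsub hΩconv) hxmin hx hz hxpos hv hc
    (s := 1 / 256) (by norm_num) (by norm_num)
  have hcomp := regularizedLoss_sub_sub_le (ℓ := ℓ) (ℓ' := ℓ') hψconv hψ hγle hxpos (hΩpos _ hz)
  have hsum : ∑ i, ((ℓ i - ℓ' i) + (γ i - γ' i) * ψ' (x i)) * ((x * (1 + v)) i - x i)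
      = ∑ i, ((ℓ i - ℓ' i) + (γ i - γ' i) * ψ' (x i)) * x i * v i :=
    sum_congr rfl fun i _ => by simp only [Pi.mul_apply, Pi.add_apply, Pi.one_apply]; ring
  have hcoeff : ∑ i, (((ℓ i - ℓ' i) + (γ i - γ' i) * ψ' (x i)) * x i) ^ 2 ≤ c / 8 := calc
    _ ≤ ∑ i, (2 * ((ℓ' i - ℓ i) ^ 2 * x i ^ 2)
          + 2 * ((γ' i - γ i) ^ 2 * ψ' (x i) ^ 2 * x i ^ 2)) :=
        sum_le_sum fun i _ => by
          linear_combination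
            add_sq_le (a := (ℓ i - ℓ' i) * x i) (b := (γ i - γ' i) * ψ' (x i) * x i)
    _ = 2 * ∑ i, (ℓ' i - ℓ i) ^ 2 * x i ^ 2
          + 2 * ∑ i, (γ' i - γ i) ^ 2 * ψ' (x i) ^ 2 * x i ^ 2 := by
        rw [sum_add_distrib, mul_sum, mul_sum]
    _ ≤ c / 8 := by linarith
  refine sq_mul_sum_sq_le_of_mul_sum_sq_le_sum_mul (by positivity) hcoeff ?_
  rw [show (1 / 4 - 2 * (1 / 256) : ℝ) = 31 / 128 by norm_num] at hgap
  linarith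

end LogBarrier

open LogBarrier in
theorem log_barrier_multiplicative_stability_general
    (d : ℕ) (Clog : ℝ)
    (ψ ψ' : ℝ → ℝ)
    (hψ : ∀ u > (0 : ℝ), HasDerivAt ψ (ψ' u) u)
    (hψconv : ConvexOn ℝ (Set.Ioi (0 : ℝ)) ψ)
    (γ γ' L L' : Fin d → ℝ)
    (hγpos : ∀ i, 0 < γ i) (hγle : ∀ i, γ i ≤ γ' i)
    (Ω : Set (Fin d → ℝ)) (hΩconv : Convex ℝ Ω)
    (hΩpos : ∀ p ∈ Ω, ∀ i, 0 < p i)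
    (x y : Fin d → ℝ) (hx : x ∈ Ω) (hy : y ∈ Ω)
    (hxmin : ∀ p ∈ Ω,
      (∑ i, x i * L i) + (∑ i, γ i * ψ (x i)) - Clog * ∑ i, Real.log (x i)
        ≤ (∑ i, p i * L i) + (∑ i, γ i * ψ (p i)) - Clog * ∑ i, Real.log (p i))
    (hymin : ∀ p ∈ Ω,
      (∑ i, y i * L' i) + (∑ i, γ' i * ψ (y i)) - Clog * ∑ i, Real.log (y i)
        ≤ (∑ i, p i * L' i) + (∑ i, γ' i * ψ (p i)) - Clog * ∑ i, Real.log (p i))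
    (hClogBig : max 9 (max (32 * ∑ i, (L' i - L i) ^ 2 * (x i) ^ 2)
        (32 * ∑ i, (γ' i - γ i) ^ 2 * (ψ' (x i)) ^ 2 * (x i) ^ 2)) ≤ Clog) :
    ∀ i, x i / 2 ≤ y i ∧ y i ≤ 2 * x i := by
  obtain ⟨h9, hLc, hγc⟩ : 9 ≤ Clog ∧ _ ∧ _ := by simpa only [max_le_iff] using hClogBig
  have hxpos := hΩpos x hx
  suffices h : ∀ i, |y i - x i| ≤ x i / 2 by
    intro i
    obtain ⟨h₁, h₂⟩ := abs_le.mp (h i)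
    constructor <;> linarith [hxpos i]
  by_contra! ⟨j, hj⟩
  obtain ⟨t, ht₀, ht₁, hv, hv_sum⟩ := exists_rescaling_of_half_lt_abs
    (u := fun i => (y i - x i) / x i) (j := j)
    (by rwa [abs_div, abs_of_pos (hxpos j), lt_div_iff₀ (hxpos j), one_div_mul_eq_div])
  set v := fun i => t * ((y i - x i) / x i)
  have hV : 1 / 4 ≤ ∑ i, v i ^ 2 := hv_sum
  have hz : (1 - t) • x + t • y = x * (1 + v) := by
    ext i
    simp only [Pi.add_apply, Pi.smul_apply, Pi.mul_apply, Pi.one_apply, smul_eq_mul, v]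
    field_simp [(hxpos i).ne']
    ring
  have hzΩ : x * (1 + v) ∈ Ω := hz ▸ hΩconv hx hy (by linarith) ht₀.le (by ring)
  have hF'conv := ((convexOn_regularizedLoss L' hψconv fun i => (hγpos i).le.trans (hγle i)).sub
    (concaveOn_mul_sum_log (c := Clog) (by linarith))).subset (fun p hp i _ => hΩpos p hp i) hΩconv
  have hF'z := hF'conv.le_left_of_right_le' hx hy (sub_pos.2 ht₁) ht₀.le (by ring)
    (hymin _ (hz ▸ hzΩ))
  rw [hz] at hF'z
  have hstep := sq_mul_sum_sq_le_of_isMinOn_of_le hψ hψconv (fun i => (hγpos i).le) hγle hΩconv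
    hΩpos hx (isMinOn_iff.mpr hxmin) hzΩ hv hF'z (by linarith) hLc hγc
  nlinarith

/-- Lemma C.1 (`general_multi_relation`): multiplicative stability via extra log-barrier. -/
theorem log_barrier_multiplicative_stability
    (d : ℕ) (hd : 1 ≤ d) (Clog : ℝ) (hClogPos : 0 < Clog)
    (ψ ψ' ψ'' : ℝ → ℝ)
    (hψ : ∀ u > (0 : ℝ), HasDerivAt ψ (ψ' u) u)
    (hψ' : ∀ u > (0 : ℝ), HasDerivAt ψ' (ψ'' u) u)
    (hψconv : ConvexOn ℝ (Set.Ioi (0 : ℝ)) ψ)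
    (hψ''comp : ∀ u > (0 : ℝ), ∀ z ∈ Set.Icc (u / 2) (2 * u),
      ψ'' u / 4 ≤ ψ'' z ∧ ψ'' z ≤ 4 * ψ'' u)
    (γ γ' L L' : Fin d → ℝ)
    (hγpos : ∀ i, 0 < γ i) (hγle : ∀ i, γ i ≤ γ' i)
    (hL : ∀ i, 0 < L i) (hL' : ∀ i, 0 < L' i)
    (Ω : Set (Fin d → ℝ)) (hΩconv : Convex ℝ Ω)
    (hΩpos : ∀ p ∈ Ω, ∀ i, 0 < p i)
    (x y : Fin d → ℝ) (hx : x ∈ Ω) (hy : y ∈ Ω)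
    (hxmin : ∀ p ∈ Ω,
      (∑ i, x i * L i) + (∑ i, γ i * ψ (x i)) - Clog * ∑ i, Real.log (x i)
        ≤ (∑ i, p i * L i) + (∑ i, γ i * ψ (p i)) - Clog * ∑ i, Real.log (p i))
    (hymin : ∀ p ∈ Ω,
      (∑ i, y i * L' i) + (∑ i, γ' i * ψ (y i)) - Clog * ∑ i, Real.log (y i)
        ≤ (∑ i, p i * L' i) + (∑ i, γ' i * ψ (p i)) - Clog * ∑ i, Real.log (p i))
    (hClogBig : max 9 (max (32 * ∑ i, (L' i - L i) ^ 2 * (x i) ^ 2)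
        (32 * ∑ i, (γ' i - γ i) ^ 2 * (ψ' (x i)) ^ 2 * (x i) ^ 2)) ≤ Clog) :
    ∀ i, x i / 2 ≤ y i ∧ y i ≤ 2 * x i :=
  log_barrier_multiplicative_stability_general d Clog ψ ψ' hψ hψconv γ γ' L L' hγpos hγle Ω hΩconv
    hΩpos x y hx hy hxmin hymin hClogBig
end

section
/- Let t ≥ 1 and K ≥ 1 be integers, I ⊆ [K] an index set with |I| ≥ 1, and let x, y ∈ (0,1]^K, c ∈ ℝ, and ℓ ∈ [0,∞)^K with ℓ_i = 0 for all i ∈ [K] except possibly one index. Suppose ∑_{i∈I} x_i = ∑_{i∈I} y_i and, for every i ∈ I, 3·K^{1/6}·√t·y_i^{−1/3} = 3·K^{1/6}·√t·x_i^{−1/3} + ℓ_i − c. Then ∑_{i∈I} y_i^{4/3} ≤ 8·∑_{i∈I} x_i^{4/3}. -/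
/-!
Write `γ = 3 K^{1/6} √t > 0`. The KKT condition reads `γ (y_i^{-1/3} - x_i^{-1/3}) = ℓ_i - c`, and
`s ↦ s^{-1/3}` is decreasing, so `y_i ≤ x_i` exactly when `c ≤ ℓ_i`. If `c ≤ 0` every coordinate
decreases. If `c > 0`, every coordinate except the one carrying the loss increases; by conservation
of mass the total increase is at most `x_{i₀}`, and convexity of `s ↦ s^{4/3}` (superadditivity and
`(a + b)^p ≤ 2^{p-1} (a^p + b^p)`) gives the bound with constant `1 + 2^{1/3} ≤ 8`.
-/

open Finset

namespace Real

theorem sum_rpow_le_rpow_sum {ι : Type*} {s : Finset ι} {f : ι → ℝ} {p : ℝ}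
    (hp : 1 ≤ p) (hf : ∀ i ∈ s, 0 ≤ f i) :
    ∑ i ∈ s, f i ^ p ≤ (∑ i ∈ s, f i) ^ p := by
  induction s using Finset.cons_induction with
  | empty => simp [zero_rpow (by linarith : p ≠ 0)]
  | cons a s ha ih =>
    rw [forall_mem_cons] at hf
    rw [sum_cons, sum_cons]
    calc f a ^ p + ∑ i ∈ s, f i ^ p ≤ f a ^ p + (∑ i ∈ s, f i) ^ p := by gcongr; exact ih hf.2
      _ ≤ (f a + ∑ i ∈ s, f i) ^ p := add_rpow_le_rpow_add hf.1 (sum_nonneg hf.2) hp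

theorem rpow_add_le_mul_rpow_add_rpow {a b p : ℝ} (ha : 0 ≤ a) (hb : 0 ≤ b) (hp : 1 ≤ p) :
    (a + b) ^ p ≤ 2 ^ (p - 1) * (a ^ p + b ^ p) := by
  lift a to NNReal using ha
  lift b to NNReal using hb
  exact_mod_cast NNReal.rpow_add_le_mul_rpow_add_rpow a b hp

theorem le_iff_of_mul_rpow_eq_mul_rpow_add {γ a b d q : ℝ} (hγ : 0 < γ) (ha : 0 < a)
    (hb : 0 < b) (hq : q < 0) (h : γ * a ^ q = γ * b ^ q + d) : a ≤ b ↔ 0 ≤ d := by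
  rw [← rpow_le_rpow_iff_of_neg hb ha hq, ← mul_le_mul_iff_right₀ hγ, h]
  exact le_add_iff_nonneg_right _

end Real

open Real

section MassTransfer

variable {ι : Type*} [DecidableEq ι] {I : Finset ι} {x y : ι → ℝ} {i₀ : ι} {p : ℝ}

theorem sum_rpow_le_of_sum_eq_of_mem (hp : 1 ≤ p) (hi₀ : i₀ ∈ I) (hx : ∀ i ∈ I, 0 ≤ x i)
    (hy : ∀ i ∈ I, 0 ≤ y i) (hsum : ∑ i ∈ I, x i = ∑ i ∈ I, y i)
    (hle : ∀ i ∈ I, i ≠ i₀ → x i ≤ y i) :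
    ∑ i ∈ I, y i ^ p ≤ (1 + 2 ^ (p - 1)) * ∑ i ∈ I, x i ^ p := by
  set S := I.erase i₀
  have hgain : ∀ i ∈ S, 0 ≤ y i - x i := fun i hi =>
    sub_nonneg.2 (hle i (mem_of_mem_erase hi) (ne_of_mem_erase hi))
  have hbalance : ∑ i ∈ S, (y i - x i) = x i₀ - y i₀ := by
    rw [← add_sum_erase I x hi₀, ← add_sum_erase I y hi₀] at hsum
    rw [sum_sub_distrib]
    linarith
  have hloss : 0 ≤ x i₀ - y i₀ := hbalance ▸ sum_nonneg hgain
  have hgain_pow : ∑ i ∈ S, (y i - x i) ^ p ≤ x i₀ ^ p :=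
    calc ∑ i ∈ S, (y i - x i) ^ p ≤ (x i₀ - y i₀) ^ p := hbalance ▸ sum_rpow_le_rpow_sum hp hgain
      _ ≤ x i₀ ^ p := by gcongr; linarith [hy i₀ hi₀]
  have hS : ∑ i ∈ S, y i ^ p ≤ 2 ^ (p - 1) * (∑ i ∈ S, x i ^ p + ∑ i ∈ S, (y i - x i) ^ p) := by
    rw [← sum_add_distrib, mul_sum]
    refine sum_le_sum fun i hi => ?_
    simpa using rpow_add_le_mul_rpow_add_rpow (hx i (mem_of_mem_erase hi)) (hgain i hi) hp
  have hy₀ : y i₀ ^ p ≤ x i₀ ^ p := by gcongr; exacts [hy i₀ hi₀, by linarith]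
  have hxS : 0 ≤ ∑ i ∈ S, x i ^ p :=
    sum_nonneg fun i hi => rpow_nonneg (hx i (mem_of_mem_erase hi)) p
  rw [← add_sum_erase I _ hi₀, ← add_sum_erase I _ hi₀]
  calc y i₀ ^ p + ∑ i ∈ S, y i ^ p
      ≤ x i₀ ^ p + 2 ^ (p - 1) * (∑ i ∈ S, x i ^ p + x i₀ ^ p) := by
        gcongr; exact hS.trans (by gcongr)
    _ ≤ (1 + 2 ^ (p - 1)) * (x i₀ ^ p + ∑ i ∈ S, x i ^ p) := by linarith

theorem sum_rpow_le_of_sum_eq (hp : 1 ≤ p) (hx : ∀ i ∈ I, 0 ≤ x i) (hy : ∀ i ∈ I, 0 ≤ y i)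
    (hsum : ∑ i ∈ I, x i = ∑ i ∈ I, y i) (hle : ∀ i ∈ I, i ≠ i₀ → x i ≤ y i) :
    ∑ i ∈ I, y i ^ p ≤ (1 + 2 ^ (p - 1)) * ∑ i ∈ I, x i ^ p := by
  by_cases hi₀ : i₀ ∈ I
  · exact sum_rpow_le_of_sum_eq_of_mem hp hi₀ hx hy hsum hle
  have hxy : ∀ i ∈ I, x i = y i :=
    (sum_eq_sum_iff_of_le fun i hi => hle i hi (ne_of_mem_of_not_mem hi hi₀)).1 hsum
  rw [sum_congr rfl fun i hi => congrArg (· ^ p) (hxy i hi).symm]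
  refine le_mul_of_one_le_left (sum_nonneg fun i hi => rpow_nonneg (hx i hi) p) ?_
  linarith [rpow_nonneg (zero_le_two : (0 : ℝ) ≤ 2) (p - 1)]

end MassTransfer

theorem group_multiplicative_relation_same_lr_general
    (t K : ℕ) (ht : 1 ≤ t) (hK : 1 ≤ K)
    (I : Finset (Fin K))
    (x y : Fin K → ℝ)
    (hx : ∀ i, x i ∈ Set.Ioc (0 : ℝ) 1) (hy : ∀ i, y i ∈ Set.Ioc (0 : ℝ) 1)
    (c : ℝ) (ℓ : Fin K → ℝ) (hℓ : ∀ i, 0 ≤ ℓ i)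
    (hsupp : ∃ i₀ : Fin K, ∀ i, i ≠ i₀ → ℓ i = 0)
    (hsum : ∑ i ∈ I, x i = ∑ i ∈ I, y i)
    (hkkt : ∀ i ∈ I,
      3 * (K : ℝ) ^ ((1 : ℝ) / 6) * Real.sqrt (t : ℝ) * (y i) ^ (-(1 : ℝ) / 3)
        = 3 * (K : ℝ) ^ ((1 : ℝ) / 6) * Real.sqrt (t : ℝ) * (x i) ^ (-(1 : ℝ) / 3)
          + ℓ i - c) :
    ∑ i ∈ I, (y i) ^ ((4 : ℝ) / 3) ≤ 8 * ∑ i ∈ I, (x i) ^ ((4 : ℝ) / 3) := by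
  obtain ⟨i₀, hsupp⟩ := hsupp
  have hγ : 0 < 3 * (K : ℝ) ^ ((1 : ℝ) / 6) * √(t : ℝ) :=
    mul_pos (mul_pos three_pos (rpow_pos_of_pos (by exact_mod_cast hK) _))
      (sqrt_pos.2 (by exact_mod_cast ht))
  have hdecr : ∀ i ∈ I, y i ≤ x i ↔ c ≤ ℓ i := fun i hi =>
    (le_iff_of_mul_rpow_eq_mul_rpow_add hγ (hy i).1 (hx i).1 (by norm_num : -(1 : ℝ) / 3 < 0)
      (by rw [hkkt i hi, add_sub_assoc])).trans sub_nonneg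
  have hxpow : 0 ≤ ∑ i ∈ I, x i ^ ((4 : ℝ) / 3) := sum_nonneg fun i _ => rpow_nonneg (hx i).1.le _
  rcases le_or_gt c 0 with hc | hc
  · calc ∑ i ∈ I, y i ^ ((4 : ℝ) / 3) ≤ ∑ i ∈ I, x i ^ ((4 : ℝ) / 3) :=
          sum_le_sum fun i hi => by gcongr; exacts [(hy i).1.le, (hdecr i hi).2 (hc.trans (hℓ i))]
      _ ≤ 8 * ∑ i ∈ I, x i ^ ((4 : ℝ) / 3) := by linarith
  have hincr : ∀ i ∈ I, i ≠ i₀ → x i ≤ y i := fun i hi hne =>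
    le_of_not_ge fun h => by linarith [(hdecr i hi).1 h, hsupp i hne]
  have hconst : 1 + (2 : ℝ) ^ ((4 : ℝ) / 3 - 1) ≤ 8 := by
    have : (2 : ℝ) ^ ((4 : ℝ) / 3 - 1) ≤ 2 ^ (1 : ℝ) :=
      rpow_le_rpow_of_exponent_le (by norm_num) (by norm_num)
    linarith [rpow_one (2 : ℝ)]
  calc ∑ i ∈ I, y i ^ ((4 : ℝ) / 3)
      ≤ (1 + 2 ^ ((4 : ℝ) / 3 - 1)) * ∑ i ∈ I, x i ^ ((4 : ℝ) / 3) :=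
        sum_rpow_le_of_sum_eq (by norm_num) (fun i _ => (hx i).1.le) (fun i _ => (hy i).1.le)
          hsum hincr
    _ ≤ 8 * ∑ i ∈ I, x i ^ ((4 : ℝ) / 3) := mul_le_mul_of_nonneg_right hconst hxpow

/-- Corollary D.2 (`col:group_multiplicative_relation`). -/
theorem group_multiplicative_relation_same_lr
    (t K : ℕ) (ht : 1 ≤ t) (hK : 1 ≤ K)
    (I : Finset (Fin K)) (hI : I.Nonempty)
    (x y : Fin K → ℝ)
    (hx : ∀ i, x i ∈ Set.Ioc (0 : ℝ) 1) (hy : ∀ i, y i ∈ Set.Ioc (0 : ℝ) 1)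
    (c : ℝ) (ℓ : Fin K → ℝ) (hℓ : ∀ i, 0 ≤ ℓ i)
    (hsupp : ∃ i₀ : Fin K, ∀ i, i ≠ i₀ → ℓ i = 0)
    (hsum : ∑ i ∈ I, x i = ∑ i ∈ I, y i)
    (hkkt : ∀ i ∈ I,
      3 * (K : ℝ) ^ ((1 : ℝ) / 6) * Real.sqrt (t : ℝ) * (y i) ^ (-(1 : ℝ) / 3)
        = 3 * (K : ℝ) ^ ((1 : ℝ) / 6) * Real.sqrt (t : ℝ) * (x i) ^ (-(1 : ℝ) / 3)
          + ℓ i - c) :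
    ∑ i ∈ I, (y i) ^ ((4 : ℝ) / 3) ≤ 8 * ∑ i ∈ I, (x i) ^ ((4 : ℝ) / 3) :=
  group_multiplicative_relation_same_lr_general t K ht hK I x y hx hy c ℓ hℓ hsupp hsum hkkt
end
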